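/- arXiv:2308.11491 — 4 statements merged into one kernel-verified Lean document; each statement's English description precedes it below -/
import Mathlib

section
/- Let a ≥ 0 and define V : ℝ^d → ℝ by V(x) = (1/2)‖x‖² + exp(−(a/2)‖x‖²). Then for all x, y ∈ ℝ^d, ⟨∇V(x) − ∇V(y), x − y⟩ − (1/2)‖x−y‖² − (1/2)‖∇V(x) − ∇V(y)‖² ≥ −4a/e. Consequently, for all x, y with ‖x − y‖ ≥ 4√(a/e), we have ⟨∇V(x) − ∇V(y), x − y⟩ ≥ (1/4)‖x−y‖² + (1/2)‖∇V(x) − ∇V(y)‖². -/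
open Real MeasureTheory
open scoped RealInnerProductSpace

private lemma mw_hasGradient (d : ℕ) (a : ℝ) (x : EuclideanSpace ℝ (Fin d)) :
    HasGradientAt (fun z : EuclideanSpace ℝ (Fin d) => (1/2) * ‖z‖^2 + Real.exp (-(a/2) * ‖z‖^2))
      (x - (a * Real.exp (-(a/2) * ‖x‖^2)) • x) x := by
  rw [hasGradientAt_iff_hasFDerivAt]
  have hN : HasFDerivAt (fun z : EuclideanSpace ℝ (Fin d) => ‖z‖^2)
      (2 • (innerSL ℝ x)) x := by
    simpa using (hasFDerivAt_id x).norm_sq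
  have h1 : HasFDerivAt (fun z : EuclideanSpace ℝ (Fin d) => (1/2) * ‖z‖^2)
      ((1/2 : ℝ) • (2 • (innerSL ℝ x))) x := hN.const_mul _ |>.congr_fderiv ?_
  · have hg : HasFDerivAt (fun z : EuclideanSpace ℝ (Fin d) => -(a/2) * ‖z‖^2)
        ((-(a/2) : ℝ) • (2 • (innerSL ℝ x))) x := (hN.const_mul _).congr_fderiv ?_
    · have h2 := (Real.hasDerivAt_exp (-(a/2) * ‖x‖^2)).comp_hasFDerivAt x hg
      have h3 := h1.add h2
      refine h3.congr_fderiv ?_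
      ext h
      simp [InnerProductSpace.toDual_apply_apply, inner_sub_left, real_inner_smul_left, smul_smul]
      ring
    · ext h; simp
  · ext h; simp

private lemma mw_key (a t : ℝ) (ha : 0 ≤ a) (ht : 0 ≤ t) :
    a * Real.exp (-(a/2) * t^2) * t ≤ Real.sqrt (a / Real.exp 1) := by
  have hL : 0 ≤ a * Real.exp (-(a/2) * t^2) * t :=
    mul_nonneg (mul_nonneg ha (Real.exp_pos _).le) ht
  rw [show Real.sqrt (a / Real.exp 1) = Real.sqrt (a / Real.exp 1) from rfl]
  have h2 : (a * Real.exp (-(a/2) * t^2) * t)^2 ≤ a / Real.exp 1 := by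
    have hte : a * t^2 * Real.exp (-(a * t^2)) ≤ Real.exp (-1) := by
      set s := a * t^2 with hs
      have hs0 : 0 ≤ s := mul_nonneg ha (sq_nonneg t)
      have h := Real.add_one_le_exp (s - 1)
      have : s ≤ Real.exp (s - 1) := by linarith
      calc s * Real.exp (-s) ≤ Real.exp (s - 1) * Real.exp (-s) := by
            exact mul_le_mul_of_nonneg_right this (Real.exp_pos _).le
        _ = Real.exp (-1) := by rw [← Real.exp_add]; ring_nf
    have hexpand : (a * Real.exp (-(a/2) * t^2) * t)^2
        = a * (a * t^2 * Real.exp (-(a * t^2))) := by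
      rw [mul_pow, mul_pow, ← Real.exp_nat_mul]
      push_cast
      rw [show (2:ℝ) * (-(a/2) * t^2) = -(a * t^2) by ring]
      ring
    rw [hexpand]
    calc a * (a * t^2 * Real.exp (-(a * t^2))) ≤ a * Real.exp (-1) :=
          mul_le_mul_of_nonneg_left hte ha
      _ = a / Real.exp 1 := by rw [Real.exp_neg, div_eq_mul_inv]
  calc a * Real.exp (-(a/2) * t^2) * t
      = Real.sqrt ((a * Real.exp (-(a/2) * t^2) * t)^2) := (Real.sqrt_sq hL).symm
    _ ≤ Real.sqrt (a / Real.exp 1) := Real.sqrt_le_sqrt h2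

theorem multiwell_asymptotic_co_coercivity (d : ℕ) (a : ℝ) (ha : 0 ≤ a)
    (V : EuclideanSpace ℝ (Fin d) → ℝ)
    (hV : ∀ x, V x = (1/2) * ‖x‖^2 + Real.exp (-(a/2) * ‖x‖^2)) :
    (∀ x y : EuclideanSpace ℝ (Fin d),
      ⟪gradient V x - gradient V y, x - y⟫ - (1/2) * ‖x - y‖^2
        - (1/2) * ‖gradient V x - gradient V y‖^2 ≥ -(4*a) / Real.exp 1) ∧
    (∀ x y : EuclideanSpace ℝ (Fin d), ‖x - y‖ ≥ 4 * Real.sqrt (a / Real.exp 1) →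
      ⟪gradient V x - gradient V y, x - y⟫ ≥
        (1/4) * ‖x - y‖^2 + (1/2) * ‖gradient V x - gradient V y‖^2) := by
  have hVf : V = fun z : EuclideanSpace ℝ (Fin d) =>
      (1/2) * ‖z‖^2 + Real.exp (-(a/2) * ‖z‖^2) := funext hV
  have hgrad : ∀ x : EuclideanSpace ℝ (Fin d),
      gradient V x = x - (a * Real.exp (-(a/2) * ‖x‖^2)) • x := by
    intro x
    rw [hVf]
    exact (mw_hasGradient d a x).gradient
  -- main inequality
  have main : ∀ x y : EuclideanSpace ℝ (Fin d),
      ⟪gradient V x - gradient V y, x - y⟫ - (1/2) * ‖x - y‖^2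
        - (1/2) * ‖gradient V x - gradient V y‖^2 ≥ -(4*a) / Real.exp 1 := by
    intro x y
    set u := gradient V x - gradient V y with hu
    set v := x - y with hv
    have hsq : ‖u - v‖^2 = ‖u‖^2 - 2 * ⟪u, v⟫ + ‖v‖^2 := norm_sub_sq_real u v
    have huv : u - v = (a * Real.exp (-(a/2) * ‖y‖^2)) • y
        - (a * Real.exp (-(a/2) * ‖x‖^2)) • x := by
      rw [hu, hv, hgrad x, hgrad y]
      abel
    have hb : ‖u - v‖ ≤ 2 * Real.sqrt (a / Real.exp 1) := by
      rw [huv]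
      calc ‖(a * Real.exp (-(a/2) * ‖y‖^2)) • y - (a * Real.exp (-(a/2) * ‖x‖^2)) • x‖
          ≤ ‖(a * Real.exp (-(a/2) * ‖y‖^2)) • y‖ + ‖(a * Real.exp (-(a/2) * ‖x‖^2)) • x‖ :=
            norm_sub_le _ _
        _ ≤ Real.sqrt (a / Real.exp 1) + Real.sqrt (a / Real.exp 1) := by
            have h1 := mw_key a ‖y‖ ha (norm_nonneg y)
            have h2 := mw_key a ‖x‖ ha (norm_nonneg x)
            rw [norm_smul, norm_smul]
            have e1 : ‖a * Real.exp (-(a/2) * ‖y‖^2)‖ = a * Real.exp (-(a/2) * ‖y‖^2) :=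
              abs_of_nonneg (mul_nonneg ha (Real.exp_pos _).le)
            have e2 : ‖a * Real.exp (-(a/2) * ‖x‖^2)‖ = a * Real.exp (-(a/2) * ‖x‖^2) :=
              abs_of_nonneg (mul_nonneg ha (Real.exp_pos _).le)
            rw [e1, e2]
            exact add_le_add h1 h2
        _ = 2 * Real.sqrt (a / Real.exp 1) := by ring
    have hb2 : ‖u - v‖^2 ≤ 4 * (a / Real.exp 1) := by
      have hlow : -(2 * Real.sqrt (a / Real.exp 1)) ≤ ‖u - v‖ := by
        have := norm_nonneg (u - v)
        have := Real.sqrt_nonneg (a / Real.exp 1)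
        linarith
      have := sq_le_sq' hlow hb
      have hs : (2 * Real.sqrt (a / Real.exp 1))^2 = 4 * (a / Real.exp 1) := by
        rw [mul_pow, Real.sq_sqrt (div_nonneg ha (Real.exp_pos 1).le)]; ring
      linarith
    have ha4 : -(4*a) / Real.exp 1 = -(4 * (a / Real.exp 1)) := by
      field_simp
    rw [ha4]
    have hq : 0 ≤ a / Real.exp 1 := div_nonneg ha (Real.exp_pos 1).le
    linarith [hsq, hb2]
  refine ⟨main, ?_⟩
  intro x y hxy
  have h1 := main x y
  have hv2 : ‖x - y‖^2 ≥ 16 * (a / Real.exp 1) := by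
    have h0 : 0 ≤ 4 * Real.sqrt (a / Real.exp 1) := by positivity
    have := mul_self_le_mul_self h0 hxy
    have hs : (4 * Real.sqrt (a / Real.exp 1)) * (4 * Real.sqrt (a / Real.exp 1))
        = 16 * (a / Real.exp 1) := by
      rw [show (4 * Real.sqrt (a / Real.exp 1)) * (4 * Real.sqrt (a / Real.exp 1))
        = 16 * (Real.sqrt (a / Real.exp 1) * Real.sqrt (a / Real.exp 1)) by ring,
        Real.mul_self_sqrt (div_nonneg ha (Real.exp_pos 1).le)]
    nlinarith [this]
  have ha4 : -(4*a) / Real.exp 1 = -(4 * (a / Real.exp 1)) := by field_simp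
  rw [ha4] at h1
  linarith
end

section
/- Let V : ℝ^d → ℝ be continuously differentiable, Λ-gradient Lipschitz (‖∇V(x) − ∇V(y)‖ ≤ Λ‖x−y‖ for all x,y), and asymptotically m-strongly convex in the sense that there exist m > 0 and Υ ≥ 0 with ⟨x−y, ∇V(x) − ∇V(y)⟩ ≥ m‖x−y‖² − Υ for all x, y. Then for all x, y ∈ ℝ^d with ‖x−y‖ ≥ √(2Υ/m), one has ⟨x−y, ∇V(x) − ∇V(y)⟩ ≥ (m/4)‖x−y‖² + (m/(4Λ²))‖∇V(x) − ∇V(y)‖². -/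
open Real
open scoped RealInnerProductSpace

theorem asymptotic_strong_convexity_implies_co_coercivity (d : ℕ)
    (V : EuclideanSpace ℝ (Fin d) → ℝ) (gV : EuclideanSpace ℝ (Fin d) → EuclideanSpace ℝ (Fin d))
    (hV : ∀ x, HasGradientAt V (gV x) x) (hC : Continuous gV)
    (Λ m Υ : ℝ) (hΛ : 0 < Λ) (hm : 0 < m) (hΥ : 0 ≤ Υ)
    (hLip : ∀ x y, ‖gV x - gV y‖ ≤ Λ * ‖x - y‖)
    (hconv : ∀ x y, ⟪x - y, gV x - gV y⟫ ≥ m * ‖x - y‖^2 - Υ) :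
    ∀ x y : EuclideanSpace ℝ (Fin d), ‖x - y‖ ≥ Real.sqrt (2 * Υ / m) →
      ⟪x - y, gV x - gV y⟫ ≥ (m/4) * ‖x - y‖^2 + (m / (4 * Λ^2)) * ‖gV x - gV y‖^2 := by
  intro x y hxy
  have hr : 0 ≤ ‖x - y‖ := norm_nonneg _
  have h1 : 2 * Υ / m ≤ ‖x - y‖ ^ 2 := by
    have := Real.sqrt_le_sqrt (le_of_eq (rfl : 2 * Υ / m = 2 * Υ / m))
    nlinarith [Real.sq_sqrt (by positivity : (0:ℝ) ≤ 2 * Υ / m),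
      sq_nonneg (‖x - y‖ - Real.sqrt (2 * Υ / m)), Real.sqrt_nonneg (2 * Υ / m)]
  have hΥle : Υ ≤ m * ‖x - y‖ ^ 2 / 2 := by
    have := (div_le_iff₀ hm).mp (by linarith : 2 * Υ / m ≤ ‖x - y‖ ^ 2)
    linarith
  have hL : ‖gV x - gV y‖ ^ 2 ≤ Λ ^ 2 * ‖x - y‖ ^ 2 := by
    have h := hLip x y
    nlinarith [norm_nonneg (gV x - gV y)]
  have hc := hconv x y
  have hΛ2 : 0 < 4 * Λ ^ 2 := by positivity
  have key : (m / (4 * Λ ^ 2)) * ‖gV x - gV y‖ ^ 2 ≤ (m / 4) * ‖x - y‖ ^ 2 := by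
    rw [div_mul_eq_mul_div, div_le_iff₀ hΛ2]
    nlinarith
  linarith
end

section
/- Let L_e > 0 and h > 0 satisfy L_e h² ≤ 1/9. Suppose q : [0,h] → ℝ^{Nd}, with components q^ℓ ∈ ℝ^d, satisfies q_s = x + s v − ∫₀^s (s−r)∇U(q_r) dr where ∇U satisfies the component-wise growth bound ‖∇_ℓU(q)‖ ≤ (L+εL̃)‖q^ℓ‖ + (εL̃/N)Σ_k ‖q^k‖ + ε𝐖₀ with L_e = L + 2εL̃. Then Σ_{ℓ=1}^N sup_{0≤s≤h} ‖q_s^ℓ − x^ℓ − s v^ℓ‖² ≤ (16/5)(L_e h²)² Σ_{ℓ=1}^N (‖x^ℓ‖² + h²‖v^ℓ‖² + (1/3)L_e^{−2} ε² 𝐖₀²). -/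
open Real MeasureTheory intervalIntegral Finset

private lemma aux_Le2 (L e Le : ℝ) (hLe : Le = L + 2 * e) (hL : 0 ≤ L) (he : 0 ≤ e) :
    (L + e) ^ 2 + e ^ 2 ≤ Le ^ 2 := by nlinarith

private lemma aux_absorb (T S u : ℝ) (hT : 0 ≤ T) (hS : 0 ≤ S) (hu : 0 < u)
    (hu9 : u ≤ 1 / 9) (hmain : T ≤ 9 / 4 * u ^ 2 * S + 9 / 4 * u ^ 2 * T) :
    T ≤ 16 / 5 * u ^ 2 * S := by
  have hu2 : u ^ 2 ≤ 1 / 81 := by nlinarith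
  nlinarith [mul_le_mul_of_nonneg_right hu2 hT, mul_nonneg (sq_nonneg u) hS]

private lemma aux_sq3 (A B C : ℝ) : (A + B + C) ^ 2 ≤ 3 * (A ^ 2 + B ^ 2 + C ^ 2) := by
  nlinarith [sq_nonneg (A - B), sq_nonneg (A - C), sq_nonneg (B - C)]

theorem exact_flow_deviation_from_free_flow (d N : ℕ) (hN : 0 < N)
    (L Lt ε W₀ h : ℝ) (hL : 0 ≤ L) (hLt : 0 ≤ Lt) (hε : 0 ≤ ε) (hW₀ : 0 ≤ W₀)
    (hh : 0 < h) (Le : ℝ) (hLe : Le = L + 2 * ε * Lt) (hLepos : 0 < Le)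
    (hLeh : Le * h ^ 2 ≤ 1 / 9)
    (F : Fin N → (Fin N → EuclideanSpace ℝ (Fin d)) → EuclideanSpace ℝ (Fin d))
    (hF : ∀ (ℓ : Fin N) (y : Fin N → EuclideanSpace ℝ (Fin d)),
      ‖F ℓ y‖ ≤ (L + ε * Lt) * ‖y ℓ‖ + (ε * Lt / N) * ∑ k, ‖y k‖ + ε * W₀)
    (x v : Fin N → EuclideanSpace ℝ (Fin d))
    (q : ℝ → Fin N → EuclideanSpace ℝ (Fin d))
    (hqc : ContinuousOn q (Set.Icc 0 h))
    (hq : ∀ s ∈ Set.Icc (0:ℝ) h, ∀ ℓ : Fin N,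
      q s ℓ = x ℓ + s • v ℓ - ∫ r in (0:ℝ)..s, (s - r) • F ℓ (q r)) :
    ∑ ℓ : Fin N, (⨆ s : Set.Icc (0:ℝ) h, ‖q s ℓ - x ℓ - (s : ℝ) • v ℓ‖ ^ 2) ≤
      (16 / 5) * (Le * h ^ 2) ^ 2 *
        ∑ ℓ : Fin N, (‖x ℓ‖ ^ 2 + h ^ 2 * ‖v ℓ‖ ^ 2 + (1 / 3) * ε ^ 2 * W₀ ^ 2 / Le ^ 2) := by
  have hNpos : (0:ℝ) < N := by exact_mod_cast hN
  haveI : Nonempty (Set.Icc (0:ℝ) h) := ⟨⟨0, le_refl 0, hh.le⟩⟩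
  set dev : Fin N → ℝ → EuclideanSpace ℝ (Fin d) :=
    fun ℓ s => q s ℓ - x ℓ - s • v ℓ with hdev
  set D : Fin N → ℝ := fun ℓ => ⨆ s : Set.Icc (0:ℝ) h, ‖dev ℓ ↑s‖ ^ 2 with hDdef
  -- continuity of the deviation norm squared
  have hdevc : ∀ ℓ, ContinuousOn (fun s : ℝ => ‖dev ℓ s‖ ^ 2) (Set.Icc 0 h) := by
    intro ℓ
    have h1 : ContinuousOn (fun s : ℝ => q s ℓ) (Set.Icc 0 h) :=
      (continuous_apply ℓ).comp_continuousOn hqc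
    have h2 : ContinuousOn (fun s : ℝ => q s ℓ - x ℓ - s • v ℓ) (Set.Icc 0 h) :=
      (h1.sub continuousOn_const).sub (continuousOn_id.smul continuousOn_const)
    exact (h2.norm).pow 2
  have hbdd : ∀ ℓ, BddAbove (Set.range fun s : Set.Icc (0:ℝ) h => ‖dev ℓ ↑s‖ ^ 2) := by
    intro ℓ
    have := (isCompact_Icc.image_of_continuousOn (hdevc ℓ)).bddAbove
    rwa [Set.image_eq_range] at this
  have hD0 : ∀ ℓ, 0 ≤ D ℓ := by
    intro ℓ
    exact le_trans (sq_nonneg _) (le_ciSup (hbdd ℓ) ⟨0, le_refl 0, hh.le⟩)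
  have hdev_le : ∀ ℓ, ∀ s ∈ Set.Icc (0:ℝ) h, ‖dev ℓ s‖ ≤ Real.sqrt (D ℓ) := by
    intro ℓ s hs
    rw [show (s:ℝ) = ((⟨s, hs⟩ : Set.Icc (0:ℝ) h) : ℝ) from rfl]
    have h1 : ‖dev ℓ ↑(⟨s, hs⟩ : Set.Icc (0:ℝ) h)‖ ^ 2 ≤ D ℓ := le_ciSup (hbdd ℓ) _
    have := Real.sqrt_le_sqrt h1
    rwa [Real.sqrt_sq (norm_nonneg _)] at this
  set b : Fin N → ℝ := fun ℓ => ‖x ℓ‖ + h * ‖v ℓ‖ with hb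
  set a : Fin N → ℝ := fun ℓ => b ℓ + Real.sqrt (D ℓ) with ha
  have ha0 : ∀ ℓ, 0 ≤ a ℓ := by
    intro ℓ
    have h1 : 0 ≤ b ℓ := by positivity
    have h2 := Real.sqrt_nonneg (D ℓ)
    simp only [ha]; linarith
  have hq_norm : ∀ r ∈ Set.Icc (0:ℝ) h, ∀ k, ‖q r k‖ ≤ a k := by
    intro r hr k
    have heq : q r k = dev k r + x k + r • v k := by simp [hdev]; abel
    rw [heq]
    have h1 := hdev_le k r hr
    have h2 : ‖r • v k‖ ≤ h * ‖v k‖ := by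
      rw [norm_smul, Real.norm_eq_abs, abs_of_nonneg hr.1]
      exact mul_le_mul_of_nonneg_right hr.2 (norm_nonneg _)
    calc ‖dev k r + x k + r • v k‖ ≤ ‖dev k r‖ + ‖x k‖ + ‖r • v k‖ := by
          exact le_trans (norm_add_le _ _) (by gcongr; exact norm_add_le _ _)
      _ ≤ Real.sqrt (D k) + ‖x k‖ + h * ‖v k‖ := by gcongr
      _ = a k := by simp [ha, hb]; ring
  set M : Fin N → ℝ := fun ℓ => (L + ε * Lt) * a ℓ + (ε * Lt / N) * ∑ k, a k + ε * W₀
    with hM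
  have hsum_a0 : 0 ≤ ∑ k, a k := Finset.sum_nonneg fun k _ => ha0 k
  have hM0 : ∀ ℓ, 0 ≤ M ℓ := by
    intro ℓ
    have h1 : 0 ≤ (L + ε * Lt) * a ℓ := mul_nonneg (by positivity) (ha0 ℓ)
    have h2 : 0 ≤ (ε * Lt / N) * ∑ k, a k := mul_nonneg (by positivity) hsum_a0
    have h3 : 0 ≤ ε * W₀ := by positivity
    exact add_nonneg (add_nonneg h1 h2) h3
  have hFle : ∀ ℓ, ∀ r ∈ Set.Icc (0:ℝ) h, ‖F ℓ (q r)‖ ≤ M ℓ := by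
    intro ℓ r hr
    refine le_trans (hF ℓ (q r)) ?_
    show _ ≤ (L + ε * Lt) * a ℓ + (ε * Lt / N) * ∑ k, a k + ε * W₀
    gcongr
    · exact hq_norm r hr ℓ
    · exact hq_norm r hr _
  -- the key integral bound
  have key : ∀ ℓ, ∀ s ∈ Set.Icc (0:ℝ) h, ‖dev ℓ s‖ ≤ h ^ 2 / 2 * M ℓ := by
    intro ℓ s hs
    have hqs := hq s hs ℓ
    have hdev_eq : dev ℓ s = -(∫ r in (0:ℝ)..s, (s - r) • F ℓ (q r)) := by
      simp [hdev, hqs]; abel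
    rw [hdev_eq, norm_neg]
    have hbound : IntervalIntegrable (fun r => (s - r) * M ℓ) volume 0 s :=
      (((continuous_const.sub continuous_id).mul continuous_const).intervalIntegrable 0 s)
    have hae : ∀ᵐ t ∂(volume.restrict (Set.uIoc (0:ℝ) s)),
        ‖(s - t) • F ℓ (q t)‖ ≤ (s - t) * M ℓ := by
      refine (ae_restrict_mem measurableSet_uIoc).mono ?_
      intro t ht
      rw [Set.uIoc_of_le hs.1] at ht
      have ht1 : t ∈ Set.Icc (0:ℝ) h := ⟨ht.1.le, ht.2.trans hs.2⟩
      rw [norm_smul, Real.norm_eq_abs, abs_of_nonneg (by linarith [ht.2] : (0:ℝ) ≤ s - t)]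
      exact mul_le_mul_of_nonneg_left (hFle ℓ t ht1) (by linarith [ht.2])
    refine le_trans (intervalIntegral.norm_integral_le_abs_of_norm_le hae hbound) ?_
    have hint : (∫ r in (0:ℝ)..s, (s - r) * M ℓ) = s ^ 2 / 2 * M ℓ := by
      rw [intervalIntegral.integral_mul_const]
      congr 1
      have hsplit : (∫ r in (0:ℝ)..s, (s - r)) =
          (∫ r in (0:ℝ)..s, s) - ∫ r in (0:ℝ)..s, r :=
        intervalIntegral.integral_sub intervalIntegrable_const
          intervalIntegral.intervalIntegrable_id
      rw [hsplit, integral_id]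
      simp [smul_eq_mul]
      ring
    rw [hint, abs_of_nonneg (by positivity : (0:ℝ) ≤ s ^ 2 / 2 * M ℓ)]
    have hs2 : s ^ 2 ≤ h ^ 2 := pow_le_pow_left₀ hs.1 hs.2 2
    exact mul_le_mul_of_nonneg_right (by linarith) (hM0 ℓ)
  -- sup bound per component
  have hDle : ∀ ℓ, D ℓ ≤ (h ^ 2 / 2 * M ℓ) ^ 2 := by
    intro ℓ
    apply ciSup_le
    intro s
    exact pow_le_pow_left₀ (norm_nonneg _) (key ℓ s s.2) 2
  -- sums and algebra
  set T : ℝ := ∑ ℓ, D ℓ with hT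
  set S : ℝ := ∑ ℓ : Fin N, (‖x ℓ‖ ^ 2 + h ^ 2 * ‖v ℓ‖ ^ 2 + (1 / 3) * ε ^ 2 * W₀ ^ 2 / Le ^ 2)
    with hS
  have hS0 : 0 ≤ S := Finset.sum_nonneg fun ℓ _ => by positivity
  have hT0 : 0 ≤ T := Finset.sum_nonneg fun ℓ _ => hD0 ℓ
  have ha_sq : ∀ ℓ, a ℓ ^ 2 ≤ 3 * (‖x ℓ‖ ^ 2 + h ^ 2 * ‖v ℓ‖ ^ 2 + D ℓ) := by
    intro ℓ
    have h1 : Real.sqrt (D ℓ) ^ 2 = D ℓ := Real.sq_sqrt (hD0 ℓ)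
    calc a ℓ ^ 2 = (‖x ℓ‖ + h * ‖v ℓ‖ + Real.sqrt (D ℓ)) ^ 2 := by
          simp only [ha, hb]
      _ ≤ 3 * (‖x ℓ‖ ^ 2 + (h * ‖v ℓ‖) ^ 2 + Real.sqrt (D ℓ) ^ 2) := aux_sq3 _ _ _
      _ = 3 * (‖x ℓ‖ ^ 2 + h ^ 2 * ‖v ℓ‖ ^ 2 + D ℓ) := by rw [h1]; ring
  have hM_sq : ∀ ℓ, M ℓ ^ 2 ≤ 3 * ((L + ε * Lt) ^ 2 * a ℓ ^ 2
      + (ε * Lt / N) ^ 2 * (∑ k, a k) ^ 2 + ε ^ 2 * W₀ ^ 2) := by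
    intro ℓ
    show ((L + ε * Lt) * a ℓ + (ε * Lt / N) * ∑ k, a k + ε * W₀) ^ 2 ≤ _
    calc ((L + ε * Lt) * a ℓ + (ε * Lt / N) * ∑ k, a k + ε * W₀) ^ 2
        ≤ 3 * (((L + ε * Lt) * a ℓ) ^ 2 + ((ε * Lt / N) * ∑ k, a k) ^ 2
          + (ε * W₀) ^ 2) := aux_sq3 _ _ _
      _ = 3 * ((L + ε * Lt) ^ 2 * a ℓ ^ 2
          + (ε * Lt / N) ^ 2 * (∑ k, a k) ^ 2 + ε ^ 2 * W₀ ^ 2) := by ring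
  have hCS : (∑ k, a k) ^ 2 ≤ N * ∑ k, a k ^ 2 := by
    have := sq_sum_le_card_mul_sum_sq (s := (Finset.univ : Finset (Fin N))) (f := a)
    simpa using this
  set P : ℝ := ∑ ℓ, a ℓ ^ 2 with hP
  have hP0 : 0 ≤ P := Finset.sum_nonneg fun ℓ _ => sq_nonneg _
  set c0 : ℝ := (1 / 3) * ε ^ 2 * W₀ ^ 2 / Le ^ 2 with hc0def
  have hc00 : 0 ≤ c0 := by positivity
  have hSsplit : S = (∑ ℓ : Fin N, (‖x ℓ‖ ^ 2 + h ^ 2 * ‖v ℓ‖ ^ 2)) + N * c0 := by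
    rw [hS, Finset.sum_add_distrib, Finset.sum_const, Finset.card_univ, Fintype.card_fin,
      nsmul_eq_mul]
  have hsum_a : P ≤ 3 * ((S - N * c0) + T) := by
    calc P ≤ ∑ ℓ, 3 * (‖x ℓ‖ ^ 2 + h ^ 2 * ‖v ℓ‖ ^ 2 + D ℓ) :=
          Finset.sum_le_sum fun ℓ _ => ha_sq ℓ
      _ = 3 * ((∑ ℓ : Fin N, (‖x ℓ‖ ^ 2 + h ^ 2 * ‖v ℓ‖ ^ 2)) + T) := by
          have hsplit2 : ∀ ℓ : Fin N, 3 * (‖x ℓ‖ ^ 2 + h ^ 2 * ‖v ℓ‖ ^ 2 + D ℓ)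
              = 3 * (‖x ℓ‖ ^ 2 + h ^ 2 * ‖v ℓ‖ ^ 2) + 3 * D ℓ := fun ℓ => by ring
          rw [Finset.sum_congr rfl fun ℓ _ => hsplit2 ℓ, Finset.sum_add_distrib,
            ← Finset.mul_sum, ← Finset.mul_sum, hT]
          ring
      _ = 3 * ((S - N * c0) + T) := by rw [hSsplit]; ring
  have hLe2 : (L + ε * Lt) ^ 2 + (ε * Lt) ^ 2 ≤ Le ^ 2 :=
    aux_Le2 L (ε * Lt) Le (by rw [hLe]; ring) hL (by positivity)
  have hMsum : ∑ ℓ, M ℓ ^ 2 ≤ 3 * (Le ^ 2 * P + N * (ε ^ 2 * W₀ ^ 2)) := by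
    have h1 : ∑ ℓ, M ℓ ^ 2 ≤ ∑ ℓ : Fin N, 3 * ((L + ε * Lt) ^ 2 * a ℓ ^ 2
        + (ε * Lt / N) ^ 2 * (∑ k, a k) ^ 2 + ε ^ 2 * W₀ ^ 2) :=
      Finset.sum_le_sum fun ℓ _ => hM_sq ℓ
    have h2 : ∑ ℓ : Fin N, 3 * ((L + ε * Lt) ^ 2 * a ℓ ^ 2
        + (ε * Lt / N) ^ 2 * (∑ k, a k) ^ 2 + ε ^ 2 * W₀ ^ 2)
        = 3 * ((L + ε * Lt) ^ 2 * P
          + N * ((ε * Lt / N) ^ 2 * (∑ k, a k) ^ 2) + N * (ε ^ 2 * W₀ ^ 2)) := by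
      have hsplit3 : ∀ ℓ : Fin N, 3 * ((L + ε * Lt) ^ 2 * a ℓ ^ 2
          + (ε * Lt / N) ^ 2 * (∑ k, a k) ^ 2 + ε ^ 2 * W₀ ^ 2)
          = 3 * (L + ε * Lt) ^ 2 * a ℓ ^ 2
            + 3 * ((ε * Lt / N) ^ 2 * (∑ k, a k) ^ 2 + ε ^ 2 * W₀ ^ 2) := fun ℓ => by ring
      rw [Finset.sum_congr rfl fun ℓ _ => hsplit3 ℓ, Finset.sum_add_distrib,
        ← Finset.mul_sum, Finset.sum_const, Finset.card_univ, Fintype.card_fin,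
        nsmul_eq_mul, ← hP]
      ring
    have h3 : (ε * Lt / N) ^ 2 * (∑ k, a k) ^ 2 ≤ (ε * Lt / N) ^ 2 * (N * P) :=
      mul_le_mul_of_nonneg_left hCS (by positivity)
    have h4 : (N:ℝ) * ((ε * Lt / N) ^ 2 * (N * P)) = (ε * Lt) ^ 2 * P := by
      field_simp
    have h5 : (L + ε * Lt) ^ 2 * P + (ε * Lt) ^ 2 * P ≤ Le ^ 2 * P := by
      have := mul_le_mul_of_nonneg_right hLe2 hP0
      linarith [this]
    calc ∑ ℓ, M ℓ ^ 2 ≤ 3 * ((L + ε * Lt) ^ 2 * P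
          + N * ((ε * Lt / N) ^ 2 * (∑ k, a k) ^ 2) + N * (ε ^ 2 * W₀ ^ 2)) := by
          rw [← h2]; exact h1
      _ ≤ 3 * ((L + ε * Lt) ^ 2 * P + (ε * Lt) ^ 2 * P + N * (ε ^ 2 * W₀ ^ 2)) := by
          have := mul_le_mul_of_nonneg_left h3 hNpos.le
          rw [h4] at this; linarith
      _ ≤ 3 * (Le ^ 2 * P + N * (ε ^ 2 * W₀ ^ 2)) := by linarith
  have hW0eq : (N:ℝ) * (ε ^ 2 * W₀ ^ 2) = 3 * Le ^ 2 * ((N:ℝ) * c0) := by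
    rw [hc0def]; field_simp
  have hstep1 : T ≤ h ^ 4 / 4 * ∑ ℓ, M ℓ ^ 2 := by
    calc T ≤ ∑ ℓ, (h ^ 2 / 2 * M ℓ) ^ 2 := Finset.sum_le_sum fun ℓ _ => hDle ℓ
      _ = h ^ 4 / 4 * ∑ ℓ, M ℓ ^ 2 := by
          rw [Finset.mul_sum]; exact Finset.sum_congr rfl fun ℓ _ => by ring
  have hmain : T ≤ 9 / 4 * Le ^ 2 * h ^ 4 * (S + T) := by
    have h6 : Le ^ 2 * P ≤ Le ^ 2 * (3 * ((S - N * c0) + T)) :=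
      mul_le_mul_of_nonneg_left hsum_a (by positivity)
    calc T ≤ h ^ 4 / 4 * ∑ ℓ, M ℓ ^ 2 := hstep1
      _ ≤ h ^ 4 / 4 * (3 * (Le ^ 2 * P + N * (ε ^ 2 * W₀ ^ 2))) :=
          mul_le_mul_of_nonneg_left hMsum (by positivity)
      _ ≤ h ^ 4 / 4 * (3 * (Le ^ 2 * (3 * ((S - N * c0) + T))
            + 3 * Le ^ 2 * ((N:ℝ) * c0))) := by
          rw [← hW0eq]
          gcongr
      _ = 9 / 4 * Le ^ 2 * h ^ 4 * (S + T)
            + h ^ 4 / 4 * (3 * (-3 * Le ^ 2 * ((N:ℝ) * c0) + 3 * Le ^ 2 * ((N:ℝ) * c0))) := by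
          ring
      _ = 9 / 4 * Le ^ 2 * h ^ 4 * (S + T) := by ring
  -- final numeric absorption
  have hmain' : T ≤ 9 / 4 * (Le * h ^ 2) ^ 2 * S + 9 / 4 * (Le * h ^ 2) ^ 2 * T := by
    calc T ≤ 9 / 4 * Le ^ 2 * h ^ 4 * (S + T) := hmain
      _ = 9 / 4 * (Le * h ^ 2) ^ 2 * S + 9 / 4 * (Le * h ^ 2) ^ 2 * T := by ring
  exact aux_absorb T S (Le * h ^ 2) hT0 hS0 (by positivity) hLeh hmain'
end

section
/- One-step Lipschitz bound for the exact mean-field Hamiltonian flow: under the hypotheses that ∇U satisfies the difference bound ‖∇_ℓU(x) − ∇_ℓU(y)‖ ≤ (L+εL̃)‖x^ℓ−y^ℓ‖ + (εL̃/N)Σ_k‖x^k−y^k‖, set L_e = L+2εL̃ and suppose L_e h² ≤ 1/9. Let (q_t(x,v), p_t(x,v)) denote the exact Hamiltonian flow of q'' = −∇U(q). Then for all (x,v), (y,u) ∈ ℝ^{Nd} × ℝ^{Nd}: Σ_{ℓ=1}^N sup_{0≤s≤h} (‖q_s^ℓ(x,v) − q_s^ℓ(y,u)‖² + L_e^{−1}‖p_s^ℓ(x,v)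 − p_s^ℓ(y,u)‖²)... is bounded: Σ_{ℓ=1}^N sup_{0≤s≤h} |||(q_s^ℓ(x,v), p_s^ℓ(x,v)) − (q_s^ℓ(y,u), p_s^ℓ(y,u))|||² ≤ (1 + 7 L_e^{1/2} h) Σ_{ℓ=1}^N |||(x^ℓ − y^ℓ, v^ℓ − u^ℓ)|||², where |||(a,b)|||² = ‖a‖² + L_e^{−1}‖b‖². -/
open Real Finset

private lemma bdd_range_icc (g : ℝ → ℝ) (hg : Continuous g) (a b : ℝ) :
    BddAbove (Set.range fun s : Set.Icc a b => g s) := by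
  rw [← Set.image_eq_range]
  exact (isCompact_Icc.image hg).bddAbove

private lemma sqrt_sum_sq_mono {n : ℕ} (f g : Fin n → ℝ) (hfg : ∀ i, |f i| ≤ g i) :
    Real.sqrt (∑ i, f i ^ 2) ≤ Real.sqrt (∑ i, g i ^ 2) := by
  apply Real.sqrt_le_sqrt
  apply Finset.sum_le_sum
  intro i _
  calc f i ^ 2 = |f i| ^ 2 := (sq_abs _).symm
    _ ≤ g i ^ 2 := by nlinarith [hfg i, abs_nonneg (f i)]

private lemma sqrt_sum_sq_add {n : ℕ} (f g : Fin n → ℝ) :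
    Real.sqrt (∑ i, (f i + g i) ^ 2) ≤
      Real.sqrt (∑ i, f i ^ 2) + Real.sqrt (∑ i, g i ^ 2) := by
  have hf : (0:ℝ) ≤ ∑ i, f i ^ 2 := Finset.sum_nonneg fun i _ => sq_nonneg _
  have hg : (0:ℝ) ≤ ∑ i, g i ^ 2 := Finset.sum_nonneg fun i _ => sq_nonneg _
  have hcs : ∑ i, f i * g i ≤ Real.sqrt (∑ i, f i ^ 2) * Real.sqrt (∑ i, g i ^ 2) := by
    calc ∑ i, f i * g i ≤ |∑ i, f i * g i| := le_abs_self _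
      _ = Real.sqrt ((∑ i, f i * g i) ^ 2) := (Real.sqrt_sq_eq_abs _).symm
      _ ≤ Real.sqrt ((∑ i, f i ^ 2) * ∑ i, g i ^ 2) :=
          Real.sqrt_le_sqrt (Finset.sum_mul_sq_le_sq_mul_sq _ _ _)
      _ = _ := Real.sqrt_mul hf _
  have expand : ∑ i, (f i + g i) ^ 2
      = (∑ i, f i ^ 2) + 2 * (∑ i, f i * g i) + ∑ i, g i ^ 2 := by
    rw [Finset.sum_congr rfl (fun i _ => show (f i + g i) ^ 2
      = f i ^ 2 + 2 * (f i * g i) + g i ^ 2 by ring)]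
    rw [Finset.sum_add_distrib, Finset.sum_add_distrib, ← Finset.mul_sum]
  have key : ∑ i, (f i + g i) ^ 2
      ≤ (Real.sqrt (∑ i, f i ^ 2) + Real.sqrt (∑ i, g i ^ 2)) ^ 2 := by
    have e1 : Real.sqrt (∑ i, f i ^ 2) ^ 2 = ∑ i, f i ^ 2 := Real.sq_sqrt hf
    have e2 : Real.sqrt (∑ i, g i ^ 2) ^ 2 = ∑ i, g i ^ 2 := Real.sq_sqrt hg
    nlinarith [hcs]
  calc Real.sqrt (∑ i, (f i + g i) ^ 2)
      ≤ Real.sqrt ((Real.sqrt (∑ i, f i ^ 2) + Real.sqrt (∑ i, g i ^ 2)) ^ 2) :=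
        Real.sqrt_le_sqrt key
    _ = _ := Real.sqrt_sq (by positivity)

private lemma sqrt_sum_sq_smul {n : ℕ} (c : ℝ) (hc : 0 ≤ c) (f : Fin n → ℝ) :
    Real.sqrt (∑ i, (c * f i) ^ 2) = c * Real.sqrt (∑ i, f i ^ 2) := by
  have e : ∑ i, (c * f i) ^ 2 = c ^ 2 * ∑ i, f i ^ 2 := by
    rw [Finset.mul_sum]; exact Finset.sum_congr rfl fun i _ => by ring
  rw [e, Real.sqrt_mul (sq_nonneg c), Real.sqrt_sq hc]

set_option maxHeartbeats 1000000 in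
private lemma core_ineq (u α B W θ s : ℝ) (hu : 0 ≤ u) (hα : 0 ≤ α) (hB : 0 ≤ B) (hW : 0 ≤ W)
    (hθ0 : 0 < θ) (hθ : θ ≤ 1/3) (hs1 : 1.414 ≤ s) (hs2 : s ≤ 1.415)
    (h1 : u * (1 - s*θ^2) ≤ α + θ*B) (h2 : W ≤ B + s*θ*u) :
    u^2 + W^2 ≤ (1+7*θ)*(α^2+B^2) := by
  have hs0 : 0 ≤ s := by linarith
  have hθ3 : θ^2 ≤ θ/3 := by nlinarith
  have haθB : 0 ≤ α + θ*B := by positivity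
  have hu2 : u ≤ (1 + 0.57*θ)*(α + θ*B) := by
    have key : 1 ≤ (1 + 0.57*θ)*(1 - s*θ^2) := by
      nlinarith [mul_nonneg hθ0.le hθ0.le, mul_nonneg (mul_nonneg hθ0.le hθ0.le) hθ0.le]
    nlinarith [mul_le_mul_of_nonneg_left key haθB,
      mul_le_mul_of_nonneg_left h1 (by positivity : (0:ℝ) ≤ 1 + 0.57*θ)]
  have hU : 0 ≤ (1 + 0.57*θ)*(α + θ*B) := by positivity
  have hW2 : W ≤ B + 1.415*θ*((1 + 0.57*θ)*(α + θ*B)) := by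
    have h3 : s*θ*u ≤ 1.415*θ*((1 + 0.57*θ)*(α + θ*B)) := by
      calc s*θ*u ≤ 1.415*θ*u := by
            nlinarith [mul_nonneg (mul_nonneg hθ0.le hu) (show (0:ℝ) ≤ 1.415 - s by linarith)]
        _ ≤ 1.415*θ*((1 + 0.57*θ)*(α + θ*B)) := by
            nlinarith [mul_le_mul_of_nonneg_left hu2 (show (0:ℝ) ≤ 1.415*θ by positivity)]
    linarith
  have hu3 : u^2 ≤ ((1 + 0.57*θ)*(α + θ*B))^2 := by nlinarith
  have hW3 : W^2 ≤ (B + 1.415*θ*((1 + 0.57*θ)*(α + θ*B)))^2 := by nlinarith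
  nlinarith [mul_nonneg hθ0.le (sq_nonneg (α - B)), mul_nonneg hθ0.le (sq_nonneg (α + B)),
    mul_nonneg hθ0.le (sq_nonneg (2*α - B)), mul_nonneg hθ0.le (sq_nonneg (α - 2*B)),
    mul_nonneg (mul_nonneg hθ0.le hθ0.le) (sq_nonneg (α - B)),
    mul_nonneg (mul_nonneg hθ0.le hθ0.le) (sq_nonneg (α + B)),
    mul_nonneg (mul_nonneg hθ0.le hθ0.le) (sq_nonneg B),
    mul_nonneg (mul_nonneg hθ0.le hθ0.le) (sq_nonneg α),
    mul_nonneg (mul_nonneg (mul_nonneg hθ0.le hθ0.le) hθ0.le) (sq_nonneg (α+B)),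
    mul_nonneg (mul_nonneg (mul_nonneg hθ0.le hθ0.le) hθ0.le) (sq_nonneg (α-B)),
    hθ3, mul_nonneg (mul_nonneg hα hB) hθ0.le]

set_option maxHeartbeats 2000000 in
theorem exact_flow_one_step_lipschitz (d N : ℕ) (hN : 0 < N)
    (L Lt ε h : ℝ) (hL : 0 ≤ L) (hLt : 0 ≤ Lt) (hε : 0 ≤ ε) (hh : 0 < h)
    (Le : ℝ) (hLe : Le = L + 2 * ε * Lt) (hLepos : 0 < Le)
    (hLeh : Le * h ^ 2 ≤ 1 / 9)
    (F : (Fin N → EuclideanSpace ℝ (Fin d)) → Fin N → EuclideanSpace ℝ (Fin d))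
    (hF : ∀ (a b : Fin N → EuclideanSpace ℝ (Fin d)) (ℓ : Fin N),
      ‖F a ℓ - F b ℓ‖ ≤ (L + ε * Lt) * ‖a ℓ - b ℓ‖ + (ε * Lt / N) * ∑ k, ‖a k - b k‖)
    (x v y u : Fin N → EuclideanSpace ℝ (Fin d))
    (X P Y Q : ℝ → Fin N → EuclideanSpace ℝ (Fin d))
    (hX : ∀ t, HasDerivAt X (P t) t) (hP : ∀ t, HasDerivAt P (-(F (X t))) t)
    (hY : ∀ t, HasDerivAt Y (Q t) t) (hQ : ∀ t, HasDerivAt Q (-(F (Y t))) t)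
    (hX0 : X 0 = x) (hP0 : P 0 = v) (hY0 : Y 0 = y) (hQ0 : Q 0 = u) :
    ∑ ℓ : Fin N, (⨆ s : Set.Icc (0:ℝ) h,
        (‖X s ℓ - Y s ℓ‖ ^ 2 + Le⁻¹ * ‖P s ℓ - Q s ℓ‖ ^ 2)) ≤
      (1 + 7 * Real.sqrt Le * h) *
        ∑ ℓ : Fin N, (‖x ℓ - y ℓ‖ ^ 2 + Le⁻¹ * ‖v ℓ - u ℓ‖ ^ 2) := by
  haveI : Nonempty (Set.Icc (0:ℝ) h) := (Set.nonempty_Icc.2 hh.le).to_subtype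
  -- component derivatives
  have hXl : ∀ (ℓ : Fin N) (t : ℝ), HasDerivAt (fun τ => X τ ℓ) (P t ℓ) t := fun ℓ t =>
    (ContinuousLinearMap.proj (R := ℝ) (φ := fun _ : Fin N => EuclideanSpace ℝ (Fin d)) ℓ).hasFDerivAt.comp_hasDerivAt
      t (hX t)
  have hYl : ∀ (ℓ : Fin N) (t : ℝ), HasDerivAt (fun τ => Y τ ℓ) (Q t ℓ) t := fun ℓ t =>
    (ContinuousLinearMap.proj (R := ℝ) (φ := fun _ : Fin N => EuclideanSpace ℝ (Fin d)) ℓ).hasFDerivAt.comp_hasDerivAt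
      t (hY t)
  have hPl : ∀ (ℓ : Fin N) (t : ℝ), HasDerivAt (fun τ => P τ ℓ) (-(F (X t) ℓ)) t := fun ℓ t =>
    (ContinuousLinearMap.proj (R := ℝ) (φ := fun _ : Fin N => EuclideanSpace ℝ (Fin d)) ℓ).hasFDerivAt.comp_hasDerivAt
      t (hP t)
  have hQl : ∀ (ℓ : Fin N) (t : ℝ), HasDerivAt (fun τ => Q τ ℓ) (-(F (Y t) ℓ)) t := fun ℓ t =>
    (ContinuousLinearMap.proj (R := ℝ) (φ := fun _ : Fin N => EuclideanSpace ℝ (Fin d)) ℓ).hasFDerivAt.comp_hasDerivAt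
      t (hQ t)
  -- difference functions
  have hz : ∀ (ℓ : Fin N) (t : ℝ),
      HasDerivAt (fun τ => X τ ℓ - Y τ ℓ) (P t ℓ - Q t ℓ) t :=
    fun ℓ t => (hXl ℓ t).sub (hYl ℓ t)
  have hw : ∀ (ℓ : Fin N) (t : ℝ),
      HasDerivAt (fun τ => P τ ℓ - Q τ ℓ) (-(F (X t) ℓ) - -(F (Y t) ℓ)) t :=
    fun ℓ t => (hPl ℓ t).sub (hQl ℓ t)
  -- continuity
  have hzc : ∀ ℓ : Fin N, Continuous (fun τ => ‖X τ ℓ - Y τ ℓ‖) := fun ℓ =>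
    (continuous_iff_continuousAt.2 fun t => ((hz ℓ t).continuousAt)).norm
  have hwc : ∀ ℓ : Fin N, Continuous (fun τ => ‖P τ ℓ - Q τ ℓ‖) := fun ℓ =>
    (continuous_iff_continuousAt.2 fun t => ((hw ℓ t).continuousAt)).norm
  have h0mem : (0:ℝ) ∈ Set.Icc (0:ℝ) h := ⟨le_refl 0, hh.le⟩
  -- sup definitions
  set M : Fin N → ℝ := fun ℓ => ⨆ s : Set.Icc (0:ℝ) h, ‖X s ℓ - Y s ℓ‖ with hM
  set W : Fin N → ℝ := fun ℓ => ⨆ s : Set.Icc (0:ℝ) h, ‖P s ℓ - Q s ℓ‖ with hW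
  have hMle : ∀ (ℓ : Fin N) (t : ℝ), t ∈ Set.Icc (0:ℝ) h → ‖X t ℓ - Y t ℓ‖ ≤ M ℓ := by
    intro ℓ t ht
    exact le_ciSup (bdd_range_icc _ (hzc ℓ) 0 h) ⟨t, ht⟩
  have hWle : ∀ (ℓ : Fin N) (t : ℝ), t ∈ Set.Icc (0:ℝ) h → ‖P t ℓ - Q t ℓ‖ ≤ W ℓ := by
    intro ℓ t ht
    exact le_ciSup (bdd_range_icc _ (hwc ℓ) 0 h) ⟨t, ht⟩
  have hM0 : ∀ ℓ, 0 ≤ M ℓ := fun ℓ => (norm_nonneg _).trans (hMle ℓ 0 h0mem)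
  have hW0 : ∀ ℓ, 0 ≤ W ℓ := fun ℓ => (norm_nonneg _).trans (hWle ℓ 0 h0mem)
  -- constant bound on the force difference
  set G : Fin N → ℝ := fun ℓ => (L + ε * Lt) * M ℓ + (ε * Lt / N) * ∑ k, M k with hG
  have hcoef1 : (0:ℝ) ≤ L + ε * Lt := by positivity
  have hcoef2 : (0:ℝ) ≤ ε * Lt / N := by positivity
  have hG0 : ∀ ℓ, 0 ≤ G ℓ :=
    fun ℓ => add_nonneg (mul_nonneg hcoef1 (hM0 ℓ))
      (mul_nonneg hcoef2 (Finset.sum_nonneg fun k _ => hM0 k))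
  have hgb : ∀ (ℓ : Fin N) (t : ℝ), t ∈ Set.Icc (0:ℝ) h →
      ‖F (X t) ℓ - F (Y t) ℓ‖ ≤ G ℓ := by
    intro ℓ t ht
    refine (hF (X t) (Y t) ℓ).trans ?_
    have h1 : ‖X t ℓ - Y t ℓ‖ ≤ M ℓ := hMle ℓ t ht
    have h2 : ∑ k, ‖X t k - Y t k‖ ≤ ∑ k, M k :=
      Finset.sum_le_sum fun k _ => hMle k t ht
    exact add_le_add (mul_le_mul_of_nonneg_left h1 hcoef1)
      (mul_le_mul_of_nonneg_left h2 hcoef2)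
  -- mean value estimate for w
  have hwstep : ∀ (ℓ : Fin N) (t : ℝ), t ∈ Set.Icc (0:ℝ) h →
      ‖(P t ℓ - Q t ℓ) - (v ℓ - u ℓ)‖ ≤ G ℓ * h := by
    intro ℓ t ht
    have key : ‖(P t ℓ - Q t ℓ) - (P 0 ℓ - Q 0 ℓ)‖ ≤ G ℓ * ‖t - 0‖ :=
      Convex.norm_image_sub_le_of_norm_hasDerivWithin_le
      (f := fun τ => P τ ℓ - Q τ ℓ) (f' := fun τ => -(F (X τ) ℓ) - -(F (Y τ) ℓ))
      (s := Set.Icc (0:ℝ) h) (C := G ℓ)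
      (fun τ hτ => ((hw ℓ τ)).hasDerivWithinAt)
      (fun τ hτ => by
        have : ‖-(F (X τ) ℓ) - -(F (Y τ) ℓ)‖ = ‖F (X τ) ℓ - F (Y τ) ℓ‖ := by
          rw [neg_sub_neg, norm_sub_rev]
        rw [this]; exact hgb ℓ τ hτ)
      (convex_Icc 0 h) h0mem ht
    rw [hP0, hQ0] at key
    calc ‖(P t ℓ - Q t ℓ) - (v ℓ - u ℓ)‖ ≤ G ℓ * ‖t - 0‖ := key
      _ = G ℓ * t := by rw [sub_zero, Real.norm_eq_abs, abs_of_nonneg ht.1]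
      _ ≤ G ℓ * h := mul_le_mul_of_nonneg_left ht.2 (hG0 ℓ)
  -- mean value estimate for z
  have hzstep : ∀ (ℓ : Fin N) (t : ℝ), t ∈ Set.Icc (0:ℝ) h →
      ‖(X t ℓ - Y t ℓ) - ((x ℓ - y ℓ) + t • (v ℓ - u ℓ))‖ ≤ G ℓ * h * h := by
    intro ℓ t ht
    have hderiv : ∀ τ : ℝ, HasDerivAt
        (fun τ => (X τ ℓ - Y τ ℓ) - τ • (v ℓ - u ℓ))
        ((P τ ℓ - Q τ ℓ) - (v ℓ - u ℓ)) τ := by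
      intro τ
      have h2 : HasDerivAt (fun τ : ℝ => τ • (v ℓ - u ℓ)) (v ℓ - u ℓ) τ := by
        simpa using (hasDerivAt_id τ).smul_const (v ℓ - u ℓ)
      exact (hz ℓ τ).sub h2
    have key : ‖((X t ℓ - Y t ℓ) - t • (v ℓ - u ℓ)) -
        ((X 0 ℓ - Y 0 ℓ) - (0:ℝ) • (v ℓ - u ℓ))‖ ≤ G ℓ * h * ‖t - 0‖ :=
      Convex.norm_image_sub_le_of_norm_hasDerivWithin_le
      (f := fun τ => (X τ ℓ - Y τ ℓ) - τ • (v ℓ - u ℓ))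
      (f' := fun τ => (P τ ℓ - Q τ ℓ) - (v ℓ - u ℓ))
      (s := Set.Icc (0:ℝ) h) (C := G ℓ * h)
      (fun τ hτ => (hderiv τ).hasDerivWithinAt)
      (fun τ hτ => hwstep ℓ τ hτ)
      (convex_Icc 0 h) h0mem ht
    rw [hX0, hY0] at key
    have earg : (X t ℓ - Y t ℓ) - ((x ℓ - y ℓ) + t • (v ℓ - u ℓ)) =
        ((X t ℓ - Y t ℓ) - t • (v ℓ - u ℓ)) - ((x ℓ - y ℓ) - (0:ℝ) • (v ℓ - u ℓ)) := by
      rw [zero_smul]; abel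
    rw [earg]
    calc ‖((X t ℓ - Y t ℓ) - t • (v ℓ - u ℓ)) - ((x ℓ - y ℓ) - (0:ℝ) • (v ℓ - u ℓ))‖
        ≤ G ℓ * h * ‖t - 0‖ := key
      _ = G ℓ * h * t := by rw [sub_zero, Real.norm_eq_abs, abs_of_nonneg ht.1]
      _ ≤ G ℓ * h * h := mul_le_mul_of_nonneg_left ht.2 (mul_nonneg (hG0 ℓ) hh.le)
  -- pointwise bounds on the sups
  set α : Fin N → ℝ := fun ℓ => ‖x ℓ - y ℓ‖ with hα
  set β : Fin N → ℝ := fun ℓ => ‖v ℓ - u ℓ‖ with hβ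
  have hMb : ∀ ℓ, M ℓ ≤ α ℓ + (h * β ℓ + h^2 * G ℓ) := by
    intro ℓ
    apply ciSup_le
    rintro ⟨t, ht⟩
    have h1 := hzstep ℓ t ht
    calc ‖X t ℓ - Y t ℓ‖
        ≤ ‖(x ℓ - y ℓ) + t • (v ℓ - u ℓ)‖ +
          ‖(X t ℓ - Y t ℓ) - ((x ℓ - y ℓ) + t • (v ℓ - u ℓ))‖ := by
          have := norm_sub_norm_le (X t ℓ - Y t ℓ) ((x ℓ - y ℓ) + t • (v ℓ - u ℓ))
          linarith [norm_sub_rev (X t ℓ - Y t ℓ) ((x ℓ - y ℓ) + t • (v ℓ - u ℓ))]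
      _ ≤ (α ℓ + h * β ℓ) + h^2 * G ℓ := by
          have h2 : ‖(x ℓ - y ℓ) + t • (v ℓ - u ℓ)‖ ≤ α ℓ + h * β ℓ := by
            refine (norm_add_le _ _).trans ?_
            have : ‖t • (v ℓ - u ℓ)‖ = t * β ℓ := by
              rw [norm_smul, Real.norm_eq_abs, abs_of_nonneg ht.1]
            rw [this]
            have : t * β ℓ ≤ h * β ℓ :=
              mul_le_mul_of_nonneg_right ht.2 (norm_nonneg _)
            linarith [le_refl (α ℓ)]
          have h3 : ‖(X t ℓ - Y t ℓ) - ((x ℓ - y ℓ) + t • (v ℓ - u ℓ))‖ ≤ h^2 * G ℓ := by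
            calc _ ≤ G ℓ * h * h := h1
              _ = h^2 * G ℓ := by ring
          linarith
      _ = α ℓ + (h * β ℓ + h^2 * G ℓ) := by ring
  have hWb : ∀ ℓ, W ℓ ≤ β ℓ + h * G ℓ := by
    intro ℓ
    apply ciSup_le
    rintro ⟨t, ht⟩
    have h1 := hwstep ℓ t ht
    have h4 := norm_sub_norm_le (P t ℓ - Q t ℓ) (v ℓ - u ℓ)
    rw [mul_comm] at h1
    have hb : β ℓ = ‖v ℓ - u ℓ‖ := rfl
    rw [hb]
    linarith
  -- ℓ² norms
  set SA := Real.sqrt (∑ ℓ, α ℓ ^ 2) with hSA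
  set SB := Real.sqrt (∑ ℓ, β ℓ ^ 2) with hSB
  set SM := Real.sqrt (∑ ℓ, M ℓ ^ 2) with hSM
  set SW := Real.sqrt (∑ ℓ, W ℓ ^ 2) with hSW
  set SG := Real.sqrt (∑ ℓ, G ℓ ^ 2) with hSG
  have hSA0 : 0 ≤ SA := Real.sqrt_nonneg _
  have hSB0 : 0 ≤ SB := Real.sqrt_nonneg _
  have hSM0 : 0 ≤ SM := Real.sqrt_nonneg _
  have hSW0 : 0 ≤ SW := Real.sqrt_nonneg _
  have hSG0 : 0 ≤ SG := Real.sqrt_nonneg _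
  -- G vs M : ∑ G² ≤ 2 Le² ∑ M²
  have hGM : SG ≤ Real.sqrt 2 * Le * SM := by
    have key : ∑ ℓ, G ℓ ^ 2 ≤ 2 * Le^2 * ∑ ℓ, M ℓ ^ 2 := by
      have hS2 : (∑ k, M k) ^ 2 ≤ (N:ℝ) * ∑ k, M k ^ 2 := by
        have := sq_sum_le_card_mul_sum_sq (s := (Finset.univ : Finset (Fin N)))
          (f := fun k => M k)
        simpa using this
      have hstep : ∀ ℓ, G ℓ ^ 2 ≤
          2 * (L + ε*Lt)^2 * M ℓ ^ 2 + 2 * (ε*Lt/N)^2 * ((N:ℝ) * ∑ k, M k ^ 2) := by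
        intro ℓ
        have expand : G ℓ ^ 2 = ((L + ε*Lt) * M ℓ + (ε*Lt/N) * ∑ k, M k)^2 := rfl
        rw [expand]
        have hsq : ((L + ε*Lt) * M ℓ + (ε*Lt/N) * ∑ k, M k)^2 ≤
            2 * ((L + ε*Lt) * M ℓ)^2 + 2 * ((ε*Lt/N) * ∑ k, M k)^2 := by
          nlinarith [sq_nonneg ((L + ε*Lt) * M ℓ - (ε*Lt/N) * ∑ k, M k)]
        refine hsq.trans ?_
        have : ((ε*Lt/N) * ∑ k, M k)^2 ≤ (ε*Lt/N)^2 * ((N:ℝ) * ∑ k, M k ^ 2) := by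
          calc ((ε*Lt/N) * ∑ k, M k)^2 = (ε*Lt/N)^2 * (∑ k, M k)^2 := by ring
            _ ≤ (ε*Lt/N)^2 * ((N:ℝ) * ∑ k, M k ^ 2) :=
              mul_le_mul_of_nonneg_left hS2 (sq_nonneg _)
        nlinarith [this]
      have hsum := Finset.sum_le_sum (fun ℓ (_ : ℓ ∈ Finset.univ) => hstep ℓ)
      have hNne : (N:ℝ) ≠ 0 := Nat.cast_ne_zero.2 hN.ne'
      have hcoefsum : 2 * (L + ε*Lt)^2 + 2 * (ε*Lt/N)^2 * (N:ℝ)^2 ≤ 2 * Le^2 := by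
        have e : (ε*Lt/(N:ℝ))^2 * (N:ℝ)^2 = (ε*Lt)^2 := by
          field_simp
        rw [hLe]
        nlinarith [e, mul_nonneg hε hLt, mul_nonneg hL (mul_nonneg hε hLt)]
      calc ∑ ℓ, G ℓ ^ 2
          ≤ ∑ ℓ : Fin N, (2 * (L + ε*Lt)^2 * M ℓ ^ 2 +
              2 * (ε*Lt/N)^2 * ((N:ℝ) * ∑ k, M k ^ 2)) := hsum
        _ = 2 * (L + ε*Lt)^2 * (∑ ℓ, M ℓ ^ 2) +
              (N:ℝ) * (2 * (ε*Lt/N)^2 * ((N:ℝ) * ∑ k, M k ^ 2)) := by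
            rw [Finset.sum_add_distrib, ← Finset.mul_sum, Finset.sum_const]
            simp [mul_comm]
        _ = (2 * (L + ε*Lt)^2 + 2 * (ε*Lt/N)^2 * (N:ℝ)^2) * ∑ ℓ, M ℓ ^ 2 := by ring
        _ ≤ 2 * Le^2 * ∑ ℓ, M ℓ ^ 2 := by
            apply mul_le_mul_of_nonneg_right hcoefsum
            exact Finset.sum_nonneg fun ℓ _ => sq_nonneg _
    calc SG ≤ Real.sqrt (2 * Le^2 * ∑ ℓ, M ℓ ^ 2) := Real.sqrt_le_sqrt key
      _ = Real.sqrt 2 * Le * SM := by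
        rw [Real.sqrt_mul (by positivity), Real.sqrt_mul (by norm_num : (0:ℝ) ≤ 2),
          Real.sqrt_sq hLepos.le, mul_assoc]
  -- Minkowski bounds
  have hSMb : SM ≤ SA + (h * SB + h^2 * SG) := by
    have m1 : SM ≤ Real.sqrt (∑ ℓ, (α ℓ + (h * β ℓ + h^2 * G ℓ))^2) := by
      apply sqrt_sum_sq_mono
      intro ℓ
      rw [abs_of_nonneg (hM0 ℓ)]
      exact hMb ℓ
    refine m1.trans ?_
    refine (sqrt_sum_sq_add α (fun ℓ => h * β ℓ + h^2 * G ℓ)).trans ?_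
    have m2 : Real.sqrt (∑ ℓ, (h * β ℓ + h^2 * G ℓ)^2) ≤ h * SB + h^2 * SG := by
      refine (sqrt_sum_sq_add (fun ℓ => h * β ℓ) (fun ℓ => h^2 * G ℓ)).trans ?_
      rw [sqrt_sum_sq_smul h hh.le β, sqrt_sum_sq_smul (h^2) (sq_nonneg h) G]
    linarith
  have hSWb : SW ≤ SB + h * SG := by
    have m1 : SW ≤ Real.sqrt (∑ ℓ, (β ℓ + h * G ℓ)^2) := by
      apply sqrt_sum_sq_mono
      intro ℓ
      rw [abs_of_nonneg (hW0 ℓ)]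
      exact hWb ℓ
    refine m1.trans ?_
    refine (sqrt_sum_sq_add β (fun ℓ => h * G ℓ)).trans ?_
    rw [sqrt_sum_sq_smul h hh.le G]
  -- reduce the goal's sup to M and W
  have hsup : ∀ ℓ : Fin N, (⨆ s : Set.Icc (0:ℝ) h,
      (‖X s ℓ - Y s ℓ‖ ^ 2 + Le⁻¹ * ‖P s ℓ - Q s ℓ‖ ^ 2)) ≤
      M ℓ ^ 2 + Le⁻¹ * W ℓ ^ 2 := by
    intro ℓ
    apply ciSup_le
    rintro ⟨t, ht⟩
    have h1 : ‖X t ℓ - Y t ℓ‖ ^ 2 ≤ M ℓ ^ 2 :=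
      pow_le_pow_left₀ (norm_nonneg _) (hMle ℓ t ht) 2
    have h2 : ‖P t ℓ - Q t ℓ‖ ^ 2 ≤ W ℓ ^ 2 :=
      pow_le_pow_left₀ (norm_nonneg _) (hWle ℓ t ht) 2
    have h3 : Le⁻¹ * ‖P t ℓ - Q t ℓ‖ ^ 2 ≤ Le⁻¹ * W ℓ ^ 2 :=
      mul_le_mul_of_nonneg_left h2 (inv_nonneg.2 hLepos.le)
    exact add_le_add h1 h3
  have hgoal1 : ∑ ℓ : Fin N, (⨆ s : Set.Icc (0:ℝ) h,
      (‖X s ℓ - Y s ℓ‖ ^ 2 + Le⁻¹ * ‖P s ℓ - Q s ℓ‖ ^ 2)) ≤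
      SM^2 + Le⁻¹ * SW^2 := by
    have e1 : SM^2 = ∑ ℓ, M ℓ ^ 2 :=
      Real.sq_sqrt (Finset.sum_nonneg fun ℓ _ => sq_nonneg _)
    have e2 : SW^2 = ∑ ℓ, W ℓ ^ 2 :=
      Real.sq_sqrt (Finset.sum_nonneg fun ℓ _ => sq_nonneg _)
    calc ∑ ℓ : Fin N, (⨆ s : Set.Icc (0:ℝ) h,
        (‖X s ℓ - Y s ℓ‖ ^ 2 + Le⁻¹ * ‖P s ℓ - Q s ℓ‖ ^ 2))
        ≤ ∑ ℓ, (M ℓ ^ 2 + Le⁻¹ * W ℓ ^ 2) :=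
          Finset.sum_le_sum fun ℓ _ => hsup ℓ
      _ = SM^2 + Le⁻¹ * SW^2 := by
          rw [Finset.sum_add_distrib, ← Finset.mul_sum, e1, e2]
  have hgoal2 : (1 + 7 * Real.sqrt Le * h) *
      ∑ ℓ : Fin N, (‖x ℓ - y ℓ‖ ^ 2 + Le⁻¹ * ‖v ℓ - u ℓ‖ ^ 2) =
      (1 + 7 * Real.sqrt Le * h) * (SA^2 + Le⁻¹ * SB^2) := by
    have e1 : SA^2 = ∑ ℓ, α ℓ ^ 2 :=
      Real.sq_sqrt (Finset.sum_nonneg fun ℓ _ => sq_nonneg _)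
    have e2 : SB^2 = ∑ ℓ, β ℓ ^ 2 :=
      Real.sq_sqrt (Finset.sum_nonneg fun ℓ _ => sq_nonneg _)
    congr 1
    rw [Finset.sum_add_distrib, ← Finset.mul_sum, e1, e2]
  rw [hgoal2]
  refine hgoal1.trans ?_
  -- final scalar inequality
  set t := Real.sqrt Le with ht
  have ht0 : 0 < t := Real.sqrt_pos.2 hLepos
  have ht2 : t^2 = Le := Real.sq_sqrt hLepos.le
  set θ := t * h with hθdef
  have hθ0 : 0 < θ := mul_pos ht0 hh
  have hθ13 : θ ≤ 1/3 := by
    nlinarith [sq_nonneg (θ - 1/3), sq_nonneg (θ + 1/3)]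
  set s2 := Real.sqrt 2 with hs2def
  have hs2sq : s2^2 = 2 := Real.sq_sqrt (by norm_num)
  have hs2nn : 0 ≤ s2 := Real.sqrt_nonneg _
  have hs2a : 1.414 ≤ s2 := by nlinarith
  have hs2b : s2 ≤ 1.415 := by nlinarith
  have hcore := core_ineq (t * SM) (t * SA) SB SW θ s2
    (by positivity) (by positivity) hSB0 hSW0 hθ0 hθ13 hs2a hs2b
    (by -- t*SM*(1 - s2*θ^2) ≤ t*SA + θ*SB
      have key : SM ≤ SA + h * SB + s2 * θ^2 * SM := by
        have : h^2 * SG ≤ h^2 * (s2 * Le * SM) :=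
          mul_le_mul_of_nonneg_left hGM (sq_nonneg h)
        have e : h^2 * (s2 * Le * SM) = s2 * θ^2 * SM := by
          rw [hθdef]; rw [← ht2]; ring
        nlinarith [hSMb]
      nlinarith [mul_le_mul_of_nonneg_left key ht0.le])
    (by -- SW ≤ SB + s2*θ*(t*SM)
      have : h * SG ≤ h * (s2 * Le * SM) := mul_le_mul_of_nonneg_left hGM hh.le
      have e : h * (s2 * Le * SM) = s2 * θ * (t * SM) := by
        rw [hθdef]; rw [← ht2]; ring
      nlinarith [hSWb])
  -- convert : (t*SM)^2 + SW^2 ≤ (1+7θ)((t*SA)^2 + SB^2)  ⇒ goal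
  have expand : (t*SM)^2 = Le * SM^2 := by rw [mul_pow, ht2]
  have expand2 : (t*SA)^2 = Le * SA^2 := by rw [mul_pow, ht2]
  rw [expand, expand2] at hcore
  have hLeinv : 0 < Le⁻¹ := inv_pos.2 hLepos
  have final := mul_le_mul_of_nonneg_left hcore hLeinv.le
  have hLne : Le ≠ 0 := hLepos.ne'
  calc SM^2 + Le⁻¹ * SW^2 = Le⁻¹ * (Le * SM^2 + SW^2) := by
        field_simp
    _ ≤ Le⁻¹ * ((1 + 7*θ) * (Le * SA^2 + SB^2)) := final
    _ = (1 + 7 * t * h) * (SA^2 + Le⁻¹ * SB^2) := by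
        rw [hθdef]; field_simp
end
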